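/- arXiv:1807.06612 — 2 statements merged into one kernel-verified Lean document; each statement's English description precedes it below -/
import Mathlib

section
/- Let ΔA_i and symmetric M_i ≻ 0 for i = 1,...,m with P_1 := M_1 symmetric positive definite. Set ΔA_⊕ = ⊕_{i=1}^m ΔA_i and P_⊗ = P_1 ⊗ M_2 ⊗ ... ⊗ M_m. Then ΔA_⊕^T P_⊗ + P_⊗ ΔA_⊕ = (ΔA_1^T P_1 + P_1 ΔA_1) ⊗ M_2 ⊗ ... ⊗ M_m + P_1 ⊗ Σ_{i=2}^m (M_2 ⊗ ... ⊗ M_{i-1} ⊗ (ΔA_i^T M_i + M_i ΔA_i) ⊗ M_{i+1} ⊗ ... ⊗ M_m). -/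
open Matrix
open scoped Kronecker

/-- Kronecker product of a family of matrices, realized over Pi index types. -/
noncomputable def kronFam {m : ℕ} {p q : Fin m → Type*} [∀ i, Fintype (p i)]
    (X : ∀ i, Matrix (p i) (q i) ℝ) : Matrix (∀ i, p i) (∀ i, q i) ℝ :=
  Matrix.of fun a b => ∏ i, X i (a i) (b i)

/-- Kronecker sum of a family: `⊕ᵢ Aᵢ = Σᵢ I ⊗ ⋯ ⊗ Aᵢ ⊗ ⋯ ⊗ I`. -/
noncomputable def kronSum {m : ℕ} {n : Fin m → Type*} [∀ i, Fintype (n i)] [∀ i, DecidableEq (n i)]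
    (A : ∀ i, Matrix (n i) (n i) ℝ) : Matrix (∀ i, n i) (∀ i, n i) ℝ :=
  ∑ i, kronFam (Function.update (fun j => (1 : Matrix (n j) (n j) ℝ)) i (A i))

lemma kronFam_mul {m : ℕ} {p q r : Fin m → Type*} [∀ i, Fintype (p i)] [∀ i, Fintype (q i)]
    [∀ i, Fintype (r i)] (X : ∀ i, Matrix (p i) (q i) ℝ) (Y : ∀ i, Matrix (q i) (r i) ℝ) :
    kronFam X * kronFam Y = kronFam (fun i => X i * Y i) := by
  ext a b
  simp only [kronFam, Matrix.mul_apply, Matrix.of_apply]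
  rw [Finset.prod_univ_sum]
  rw [← (Fintype.piFinset fun i => (Finset.univ : Finset (q i))).sum_coe_sort]
  rw [← Finset.sum_coe_sort]
  exact Finset.sum_bij (fun c _ => ⟨c.1, by simp [Fintype.mem_piFinset]⟩)
    (fun _ _ => Finset.mem_univ _)
    (fun c₁ _ c₂ _ h => by cases c₁; cases c₂; simpa using h)
    (fun c _ => ⟨⟨c.1, Finset.mem_univ _⟩, Finset.mem_univ _, rfl⟩)
    (fun c _ => Finset.prod_mul_distrib.symm)

lemma kronFam_one {m : ℕ} {n : Fin m → Type*} [∀ i, Fintype (n i)] [∀ i, DecidableEq (n i)] :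
    kronFam (fun i => (1 : Matrix (n i) (n i) ℝ)) = 1 := by
  ext a b
  simp only [kronFam, Matrix.of_apply, Matrix.one_apply]
  by_cases h : a = b
  · subst h; simp
  · rw [if_neg h]
    obtain ⟨i, hi⟩ := Function.ne_iff.mp h
    exact Finset.prod_eq_zero (Finset.mem_univ i) (by simp [Matrix.one_apply, hi])

lemma kronFam_transpose {m : ℕ} {p q : Fin m → Type*} [∀ i, Fintype (p i)] [∀ i, Fintype (q i)]
    (X : ∀ i, Matrix (p i) (q i) ℝ) : (kronFam X)ᵀ = kronFam (fun i => (X i)ᵀ) := by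
  ext a b; rfl

lemma update_mul {m : ℕ} {n : Fin m → Type*} [∀ i, Fintype (n i)] [∀ i, DecidableEq (n i)]
    (M : ∀ i, Matrix (n i) (n i) ℝ) (i : Fin m) (X : Matrix (n i) (n i) ℝ) :
    (fun j => Function.update (fun k => (1 : Matrix (n k) (n k) ℝ)) i X j * M j)
      = Function.update M i (X * M i) := by
  funext j
  rcases eq_or_ne j i with rfl | h
  · simp
  · simp [Function.update_of_ne h]

lemma mul_update {m : ℕ} {n : Fin m → Type*} [∀ i, Fintype (n i)] [∀ i, DecidableEq (n i)]
    (M : ∀ i, Matrix (n i) (n i) ℝ) (i : Fin m) (X : Matrix (n i) (n i) ℝ) :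
    (fun j => M j * Function.update (fun k => (1 : Matrix (n k) (n k) ℝ)) i X j)
      = Function.update M i (M i * X) := by
  funext j
  rcases eq_or_ne j i with rfl | h
  · simp
  · simp [Function.update_of_ne h]

lemma update_transpose {m : ℕ} {n : Fin m → Type*} [∀ i, Fintype (n i)] [∀ i, DecidableEq (n i)]
    (i : Fin m) (X : Matrix (n i) (n i) ℝ) :
    (fun j => (Function.update (fun k => (1 : Matrix (n k) (n k) ℝ)) i X j)ᵀ)
      = Function.update (fun k => (1 : Matrix (n k) (n k) ℝ)) i Xᵀ := by
  funext j
  rcases eq_or_ne j i with rfl | h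
  · simp
  · simp [Function.update_of_ne h]

lemma kronFam_update_add {m : ℕ} {n : Fin m → Type*} [∀ i, Fintype (n i)] [∀ i, DecidableEq (n i)]
    (M : ∀ i, Matrix (n i) (n i) ℝ) (i : Fin m) (X Y : Matrix (n i) (n i) ℝ) :
    kronFam (Function.update M i (X + Y))
      = kronFam (Function.update M i X) + kronFam (Function.update M i Y) := by
  ext a b
  simp only [kronFam, Matrix.of_apply, Matrix.add_apply]
  have h : ∀ (Z : Matrix (n i) (n i) ℝ),
      ∏ j ∈ Finset.univ.erase i, Function.update M i Z j (a j) (b j)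
        = ∏ j ∈ Finset.univ.erase i, M j (a j) (b j) := fun Z =>
    Finset.prod_congr rfl fun j hj => by
      rw [Function.update_of_ne (Finset.ne_of_mem_erase hj)]
  rw [← Finset.mul_prod_erase _ _ (Finset.mem_univ i),
      ← Finset.mul_prod_erase _ _ (Finset.mem_univ i),
      ← Finset.mul_prod_erase _ _ (Finset.mem_univ i), h, h, h]
  simp [add_mul]

/-- Layer 1 is written explicitly; layers 2,…,m are the family `M, ΔA` over `Fin m`. -/
theorem stmt8 {n₁ : Type*} [Fintype n₁] [DecidableEq n₁]
    {m : ℕ} {n : Fin m → Type*} [∀ i, Fintype (n i)] [∀ i, DecidableEq (n i)]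
    (ΔA₁ P₁ : Matrix n₁ n₁ ℝ) (ΔA M : ∀ i, Matrix (n i) (n i) ℝ)
    (hP₁ : P₁.PosDef) (hM : ∀ i, (M i).PosDef) :
    (ΔA₁ ⊗ₖ (1 : Matrix (∀ i, n i) (∀ i, n i) ℝ)
        + (1 : Matrix n₁ n₁ ℝ) ⊗ₖ kronSum ΔA)ᵀ * (P₁ ⊗ₖ kronFam M)
      + (P₁ ⊗ₖ kronFam M) * (ΔA₁ ⊗ₖ (1 : Matrix (∀ i, n i) (∀ i, n i) ℝ)
        + (1 : Matrix n₁ n₁ ℝ) ⊗ₖ kronSum ΔA)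
    = (ΔA₁ᵀ * P₁ + P₁ * ΔA₁) ⊗ₖ kronFam M
      + P₁ ⊗ₖ (∑ i, kronFam (Function.update M i ((ΔA i)ᵀ * M i + M i * ΔA i))) := by
  have hKS : (kronSum ΔA)ᵀ * kronFam M + kronFam M * kronSum ΔA
      = ∑ i, kronFam (Function.update M i ((ΔA i)ᵀ * M i + M i * ΔA i)) := by
    unfold kronSum
    rw [Matrix.transpose_sum, Finset.sum_mul, Finset.mul_sum, ← Finset.sum_add_distrib]
    refine Finset.sum_congr rfl fun i _ => ?_
    rw [kronFam_transpose, update_transpose, kronFam_mul, kronFam_mul,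
        update_mul, mul_update, kronFam_update_add]
  rw [← hKS]
  simp only [Matrix.transpose_add, ← Matrix.kroneckerMap_transpose, Matrix.transpose_one,
    Matrix.add_mul, Matrix.mul_add, ← Matrix.mul_kronecker_mul, Matrix.one_mul, Matrix.mul_one,
    Matrix.add_kronecker, Matrix.kronecker_add]
  abel
end

section
/- Consider the perturbed linear system ẋ = (A + ΔA)x + Bu with cost J = ∫_0^∞ (x^T Q x + u^T R u) dt, Q ⪰ 0, R ≻ 0. Suppose P ≻ 0 satisfies A^T P + PA + Q − PBR^{-1}B^T P + U = 0 where U is symmetric and ΔA^T P + P ΔA ⪯ U, and suppose the closed-loop state x(t) under u = −Kx with K = R^{-1}B^T P satisfies x(t) → 0 as t → ∞. Then J ≤ x_0^T P x_0. -/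
open Matrix MeasureTheory
open scoped Kronecker

private lemma hasDerivAt_dot' {n : Type*} [Fintype n] {x y : ℝ → n → ℝ} {x' y' : n → ℝ} {t : ℝ}
    (hx : HasDerivAt x x' t) (hy : HasDerivAt y y' t) :
    HasDerivAt (fun s => x s ⬝ᵥ y s) (x' ⬝ᵥ y t + x t ⬝ᵥ y') t := by
  have hx' := hasDerivAt_pi.mp hx
  have hy' := hasDerivAt_pi.mp hy
  have h : HasDerivAt (fun s => ∑ i, x s i * y s i)
      (∑ i, (x' i * y t i + x t i * y' i)) t :=
    HasDerivAt.fun_sum fun i _ => (hx' i).mul (hy' i)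
  simpa [dotProduct, Finset.sum_add_distrib] using h

private lemma hasDerivAt_mulVec' {n m : Type*} [Fintype n] [Fintype m] (M : Matrix m n ℝ)
    {x : ℝ → n → ℝ} {x' : n → ℝ} {t : ℝ} (hx : HasDerivAt x x' t) :
    HasDerivAt (fun s => M *ᵥ x s) (M *ᵥ x') t := by
  rw [hasDerivAt_pi] at hx ⊢
  intro i
  have h : HasDerivAt (fun s => ∑ j, M i j * x s j) (∑ j, M i j * x' j) t :=
    HasDerivAt.fun_sum fun j _ => (hx j).const_mul (M i j)
  simpa [mulVec, dotProduct] using h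

private lemma dot_shift' {n m : Type*} [Fintype n] [Fintype m] (M : Matrix m n ℝ)
    (v : n → ℝ) (w : m → ℝ) : (M *ᵥ v) ⬝ᵥ w = v ⬝ᵥ (Mᵀ *ᵥ w) := by
  rw [← Matrix.vecMul_transpose, ← Matrix.dotProduct_mulVec]

/-- Guaranteed-cost LQ theorem (Dorato): the feedback `u = -R⁻¹Bᵀ P x` on the perturbed
system gives cost at most `x₀ᵀ P x₀`. -/
theorem stmt13 {n p : Type*} [Fintype n] [Fintype p] [DecidableEq p]
    (A ΔA Q P U : Matrix n n ℝ) (B : Matrix n p ℝ) (R : Matrix p p ℝ)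
    (hQ : Q.PosSemidef) (hR : R.PosDef) (hP : P.PosDef) (hU : U.IsHermitian)
    (hRic : Aᵀ * P + P * A + Q - P * B * R⁻¹ * Bᵀ * P + U = 0)
    (hUb : (U - (ΔAᵀ * P + P * ΔA)).PosSemidef)
    (x : ℝ → n → ℝ) (u : ℝ → p → ℝ)
    (hu : ∀ t, u t = -((R⁻¹ * Bᵀ * P) *ᵥ x t))
    (hx : ∀ t, HasDerivAt x ((A + ΔA) *ᵥ x t + B *ᵥ u t) t)
    (hlim : Filter.Tendsto x Filter.atTop (nhds 0)) :
    ∫ t in Set.Ioi (0 : ℝ), (x t ⬝ᵥ Q *ᵥ x t + u t ⬝ᵥ R *ᵥ u t)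
      ≤ x 0 ⬝ᵥ P *ᵥ x 0 := by
  classical
  set K : Matrix p n ℝ := R⁻¹ * Bᵀ * P with hKdef
  set Acl : Matrix n n ℝ := A + ΔA - B * K with hAcl
  set S : Matrix n n ℝ := U - (ΔAᵀ * P + P * ΔA) with hSdef
  set f : ℝ → ℝ := fun t => x t ⬝ᵥ Q *ᵥ x t + u t ⬝ᵥ R *ᵥ u t with hfdef
  set V : ℝ → ℝ := fun t => x t ⬝ᵥ P *ᵥ x t with hVdef
  have hRdet : IsUnit R.det := hR.det_pos.ne'.isUnit
  have hRinv : R⁻¹ * R = 1 := Matrix.nonsing_inv_mul R hRdet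
  have hPt : Pᵀ = P := by
    have := hP.isHermitian.eq
    rwa [Matrix.conjTranspose_eq_transpose_of_trivial] at this
  have hRt : Rᵀ = R := by
    have := hR.isHermitian.eq
    rwa [Matrix.conjTranspose_eq_transpose_of_trivial] at this
  have hRit : (R⁻¹)ᵀ = R⁻¹ := by rw [Matrix.transpose_nonsing_inv, hRt]
  have hKt : Kᵀ = P * B * R⁻¹ := by
    rw [hKdef, Matrix.transpose_mul, Matrix.transpose_mul, hPt, hRit,
      Matrix.transpose_transpose, Matrix.mul_assoc]
  have hKRK : Kᵀ * R * K = P * B * R⁻¹ * Bᵀ * P := by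
    letI := R.invertibleOfIsUnitDet hRdet
    rw [hKt, hKdef]
    simp only [Matrix.mul_assoc, Matrix.inv_mul_cancel_left_of_invertible,
      Matrix.mul_inv_cancel_left_of_invertible]
  -- key matrix identity
  have hM : Q + Kᵀ * R * K + (Aclᵀ * P + P * Acl) = -S := by
    have hAclT : Aclᵀ = Aᵀ + ΔAᵀ - P * B * R⁻¹ * Bᵀ := by
      rw [hAcl, Matrix.transpose_sub, Matrix.transpose_add, Matrix.transpose_mul, hKt]
    rw [hKRK, hAclT, hAcl, hSdef, hKdef]
    rw [← sub_eq_zero]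
    calc Q + P * B * R⁻¹ * Bᵀ * P +
          ((Aᵀ + ΔAᵀ - P * B * R⁻¹ * Bᵀ) * P + P * (A + ΔA - B * (R⁻¹ * Bᵀ * P))) -
          -(U - (ΔAᵀ * P + P * ΔA))
        = Aᵀ * P + P * A + Q - P * B * R⁻¹ * Bᵀ * P + U := by
          simp only [Matrix.sub_mul, Matrix.add_mul, Matrix.mul_sub, Matrix.mul_add,
            Matrix.mul_assoc, neg_sub, sub_eq_add_neg, neg_add_rev, neg_neg,
            smul_mul_assoc, mul_smul_comm]
          abel_nf
          simp only [smul_mul_assoc, mul_smul_comm, Matrix.mul_assoc]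
          abel
      _ = 0 := hRic
  -- closed-loop dynamics
  have hx' : ∀ t, HasDerivAt x (Acl *ᵥ x t) t := by
    intro t
    have h := hx t
    have e : (A + ΔA) *ᵥ x t + B *ᵥ u t = Acl *ᵥ x t := by
      rw [hu t, hAcl]
      simp [Matrix.sub_mulVec, Matrix.mulVec_neg, Matrix.mulVec_mulVec, sub_eq_add_neg,
        Matrix.add_mulVec, Matrix.neg_mulVec]
    rwa [e] at h
  -- positivity facts
  have hf0 : ∀ t, 0 ≤ f t := by
    intro t
    have h1 : 0 ≤ x t ⬝ᵥ Q *ᵥ x t := by simpa using hQ.dotProduct_mulVec_nonneg (x t)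
    have h2 : 0 ≤ u t ⬝ᵥ R *ᵥ u t := by simpa using hR.posSemidef.dotProduct_mulVec_nonneg (u t)
    exact add_nonneg h1 h2
  have hS0 : ∀ t, 0 ≤ x t ⬝ᵥ S *ᵥ x t := by
    intro t
    simpa using hUb.dotProduct_mulVec_nonneg (x t)
  have hV0 : ∀ t, 0 ≤ V t := by
    intro t
    simpa using hP.posSemidef.dotProduct_mulVec_nonneg (x t)
  -- derivative of V
  have hVd : ∀ t, HasDerivAt V (-(f t) - x t ⬝ᵥ S *ᵥ x t) t := by
    intro t
    have h := hasDerivAt_dot' (hx' t) (hasDerivAt_mulVec' P (hx' t))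
    have key : f t + ((Acl *ᵥ x t) ⬝ᵥ (P *ᵥ x t) + x t ⬝ᵥ (P *ᵥ (Acl *ᵥ x t)))
        = x t ⬝ᵥ ((Q + Kᵀ * R * K + (Aclᵀ * P + P * Acl)) *ᵥ x t) := by
      rw [hfdef]
      simp only [hu t, dot_shift', Matrix.mulVec_mulVec, Matrix.add_mulVec,
        dotProduct_add, Matrix.mulVec_neg, dotProduct_neg,
        neg_dotProduct, neg_neg, Matrix.transpose_transpose, Matrix.mul_assoc]
    rw [hM] at key
    have key2 : f t + ((Acl *ᵥ x t) ⬝ᵥ (P *ᵥ x t) + x t ⬝ᵥ (P *ᵥ (Acl *ᵥ x t)))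
        = -(x t ⬝ᵥ S *ᵥ x t) := by
      rw [key]
      simp [Matrix.neg_mulVec]
    have : (Acl *ᵥ x t) ⬝ᵥ (P *ᵥ x t) + x t ⬝ᵥ (P *ᵥ (Acl *ᵥ x t))
        = -(f t) - x t ⬝ᵥ S *ᵥ x t := by linarith
    rw [this] at h
    exact h
  -- continuity
  have hxc : Continuous x := by
    have : Differentiable ℝ x := fun t => (hx t).differentiableAt
    exact this.continuous
  have huc : Continuous u := by
    have hueq : u = fun t => -((R⁻¹ * Bᵀ * P) *ᵥ x t) := funext hu
    rw [hueq]
    exact (continuous_const.matrix_mulVec hxc).neg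
  have hfc : Continuous f := by
    apply Continuous.add
    · exact hxc.dotProduct (continuous_const.matrix_mulVec hxc)
    · exact huc.dotProduct (continuous_const.matrix_mulVec huc)
  have hSc : Continuous fun t => x t ⬝ᵥ S *ᵥ x t :=
    hxc.dotProduct (continuous_const.matrix_mulVec hxc)
  -- interval integral bound
  have hIT : ∀ T : ℝ, 0 ≤ T → (∫ t in (0 : ℝ)..T, f t) ≤ V 0 := by
    intro T hT
    have hgc : Continuous fun t => -(f t) - x t ⬝ᵥ S *ᵥ x t := (hfc.neg).sub hSc
    have hftc : (∫ t in (0 : ℝ)..T, (-(f t) - x t ⬝ᵥ S *ᵥ x t)) = V T - V 0 :=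
      intervalIntegral.integral_eq_sub_of_hasDerivAt (fun t _ => hVd t)
        (hgc.intervalIntegrable 0 T)
    have hmono : (∫ t in (0 : ℝ)..T, f t)
        ≤ ∫ t in (0 : ℝ)..T, -(-(f t) - x t ⬝ᵥ S *ᵥ x t) := by
      apply intervalIntegral.integral_mono_on hT (hfc.intervalIntegrable 0 T)
        ((hgc.neg).intervalIntegrable 0 T)
      intro t _
      have := hS0 t
      simp only [Pi.neg_apply]
      linarith
    rw [intervalIntegral.integral_neg, hftc] at hmono
    have := hV0 T
    linarith
  -- conclude
  by_cases hInt : IntegrableOn f (Set.Ioi (0 : ℝ)) volume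
  · have htend := MeasureTheory.intervalIntegral_tendsto_integral_Ioi 0 hInt Filter.tendsto_id
    have hgoal : (∫ t in Set.Ioi (0 : ℝ), f t) ≤ V 0 := by
      refine le_of_tendsto htend ?_
      filter_upwards [Filter.eventually_ge_atTop (0 : ℝ)] with T hT using hIT T hT
    exact hgoal
  · rw [show (∫ t in Set.Ioi (0 : ℝ), (x t ⬝ᵥ Q *ᵥ x t + u t ⬝ᵥ R *ᵥ u t))
        = ∫ t in Set.Ioi (0 : ℝ), f t from rfl, MeasureTheory.integral_undef hInt]
    exact hV0 0
end
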